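/- arXiv:2201.06798 — 2 statements merged into one kernel-verified Lean document; each statement's English description precedes it below -/
import Mathlib

section
/- If the series Σ_{i≥0} E(Uⁱf | 𝓕₀) converges in L¹(ℙ), then there exist m, g ∈ L¹(ℙ), with m measurable with respect to 𝓕₀ and E(m | 𝓕₋₁) = 0 a.s. (so that (Uⁱm)_{i≥0} is a stationary sequence of martingale differences), such that f = m + g − Ug. -/
/-!
Write `Q φ = E(φ ∘ T | 𝓕₀)`. By the tower property (using `𝓕₀ ⊆ 𝓕₁`) the partial sums
`Sₙ = ∑_{i<n} E(Uⁱf | 𝓕₀)` satisfy `Q Sₙ = Sₙ₊₁ - f`, and `Q` is an `L¹` contraction, so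
the `𝓕₀`-measurable version `H = E(h | 𝓕₀)` of their limit `h` solves the Poisson equation
`H - Q H = f`.
Then `g = (Q H) ∘ T⁻¹` is `𝓕₋₁`-measurable and equals `E(H | 𝓕₋₁)`, so `m = H - g` is a
martingale difference and `m + g - U g = H - Q H = f`.
-/

open MeasureTheory Filter ProbabilityTheory Topology
open scoped ENNReal NNReal

/-- `zIter T n` is the `n`-th iterate (for `n : ℤ`) of the bimeasurable bijection `T`. -/
noncomputable def zIter {Ω : Type*} {mΩ : MeasurableSpace Ω} (T : Ω ≃ᵐ Ω) (n : ℤ) : Ω → Ω :=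
  fun ω => if 0 ≤ n then (⇑T)^[n.toNat] ω else (⇑T.symm)^[(-n).toNat] ω

lemma zIter_neg_one {Ω : Type*} {mΩ : MeasurableSpace Ω} (T : Ω ≃ᵐ Ω) :
    zIter T (-1) = T.symm := by
  funext ω
  simp [zIter]

section

variable {Ω : Type*} {m m₀ : MeasurableSpace Ω} {μ : Measure[m₀] Ω}

lemma ae_eq_of_tendsto_integral_abs_sub {u : ℕ → Ω → ℝ} {x y : Ω → ℝ}
    (hu : ∀ n, Integrable (u n) μ) (hx : Integrable x μ) (hy : Integrable y μ)
    (hux : Tendsto (fun n => ∫ ω, |u n ω - x ω| ∂μ) atTop (𝓝 0))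
    (huy : Tendsto (fun n => ∫ ω, |u n ω - y ω| ∂μ) atTop (𝓝 0)) :
    x =ᵐ[μ] y := by
  have hdist : ∀ {n} {z : Ω → ℝ}, Integrable z μ → Integrable (fun ω => |u n ω - z ω|) μ :=
    fun hz => ((hu _).sub hz).abs
  have htriangle : ∀ n, ∫ ω, |x ω - y ω| ∂μ ≤
      (∫ ω, |u n ω - x ω| ∂μ) + ∫ ω, |u n ω - y ω| ∂μ := fun n => by
    rw [← integral_add (hdist hx) (hdist hy)]
    refine integral_mono (hx.sub hy).abs ((hdist hx).add (hdist hy)) fun ω => ?_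
    simpa only [abs_sub_comm (u n ω) (x ω)] using abs_sub_le (x ω) (u n ω) (y ω)
  have hzero : ∫ ω, |x ω - y ω| ∂μ = 0 :=
    le_antisymm
      (le_of_tendsto_of_tendsto tendsto_const_nhds (by simpa using hux.add huy)
        (Eventually.of_forall htriangle))
      (integral_nonneg fun ω => abs_nonneg _)
  filter_upwards [(integral_eq_zero_iff_of_nonneg (fun ω => abs_nonneg _)
    (hx.sub hy).abs).mp hzero] with ω hω
  exact sub_eq_zero.mp (abs_eq_zero.mp hω)

lemma integral_abs_condExp_sub_condExp_le {φ ψ : Ω → ℝ}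
    (hφ : Integrable φ μ) (hψ : Integrable ψ μ) :
    ∫ ω, |(μ[φ|m]) ω - (μ[ψ|m]) ω| ∂μ ≤ ∫ ω, |φ ω - ψ ω| ∂μ :=
  calc ∫ ω, |(μ[φ|m]) ω - (μ[ψ|m]) ω| ∂μ = ∫ ω, |(μ[φ - ψ|m]) ω| ∂μ :=
        integral_congr_ae <| (condExp_sub hφ hψ m).mono fun ω hω => by simp [hω]
    _ ≤ ∫ ω, |φ ω - ψ ω| ∂μ := integral_abs_condExp_le _

lemma tendsto_integral_abs_sub_condExp (hm : m ≤ m₀)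
    [SigmaFinite (μ.trim hm)] {u : ℕ → Ω → ℝ} {v : Ω → ℝ}
    (hu : ∀ n, StronglyMeasurable[m] (u n)) (hui : ∀ n, Integrable (u n) μ)
    (hv : Integrable v μ) (huv : Tendsto (fun n => ∫ ω, |u n ω - v ω| ∂μ) atTop (𝓝 0)) :
    Tendsto (fun n => ∫ ω, |u n ω - (μ[v|m]) ω| ∂μ) atTop (𝓝 0) := by
  refine squeeze_zero (fun n => integral_nonneg fun ω => abs_nonneg _) (fun n => ?_) huv
  have := integral_abs_condExp_sub_condExp_le (m := m) (hui n) hv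
  rwa [condExp_of_stronglyMeasurable hm (hu n) (hui n)] at this

lemma condExp_comp_measurableEquiv [IsFiniteMeasure μ] (S : Ω ≃ᵐ Ω)
    (hS : MeasurePreserving S μ μ) (hm : m ≤ m₀) {φ : Ω → ℝ} (hφ : Integrable φ μ) :
    μ[φ ∘ S | m.comap S] =ᵐ[μ] μ[φ|m] ∘ S := by
  have hSm : Measurable[m.comap S, m] S := Measurable.of_comap_le le_rfl
  refine (ae_eq_condExp_of_forall_setIntegral_eq
    (Measurable.comap_le (S.measurable.mono le_rfl hm)) (hS.integrable_comp_of_integrable hφ)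
    (fun s _ _ => (hS.integrable_comp_of_integrable integrable_condExp).integrableOn) ?_
    (stronglyMeasurable_condExp.comp_measurable hSm).aestronglyMeasurable).symm
  rintro _ ⟨A, hA, rfl⟩ _
  simp only [Function.comp_apply]
  rw [hS.setIntegral_preimage_emb S.measurableEmbedding,
    hS.setIntegral_preimage_emb S.measurableEmbedding, setIntegral_condExp hm hφ hA]

lemma MeasurableEquiv.comap_symm_le_of_le_comap (T : Ω ≃ᵐ Ω) (hmT : m ≤ m.comap T) :
    m.comap T.symm ≤ m :=
  calc m.comap T.symm ≤ (m.comap T).comap T.symm := MeasurableSpace.comap_mono hmT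
    _ = m := by
      rw [MeasurableSpace.comap_comp, MeasurableEquiv.self_comp_symm, MeasurableSpace.comap_id]

lemma condExp_condExp_comp_of_le_comap [IsFiniteMeasure μ] (T : Ω ≃ᵐ Ω)
    (hT : MeasurePreserving T μ μ) (hm : m ≤ m₀) (hmT : m ≤ m.comap T) {φ : Ω → ℝ}
    (hφ : Integrable φ μ) :
    μ[μ[φ|m] ∘ T | m] =ᵐ[μ] μ[φ ∘ T | m] :=
  (condExp_congr_ae (condExp_comp_measurableEquiv T hT hm hφ).symm).trans
    (condExp_condExp_of_le hmT (T.measurable.mono le_rfl hm).comap_le)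

lemma integral_abs_condExp_comp_sub_condExp_comp_le (T : Ω ≃ᵐ Ω)
    (hT : MeasurePreserving T μ μ) {φ ψ : Ω → ℝ} (hφ : Integrable φ μ) (hψ : Integrable ψ μ) :
    ∫ ω, |(μ[φ ∘ T|m]) ω - (μ[ψ ∘ T|m]) ω| ∂μ ≤ ∫ ω, |φ ω - ψ ω| ∂μ :=
  (integral_abs_condExp_sub_condExp_le (hT.integrable_comp_of_integrable hφ)
    (hT.integrable_comp_of_integrable hψ)).trans_eq
    (hT.integral_comp' fun ω => |φ ω - ψ ω|)

variable (m μ) in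
noncomputable def condExpPartialSum (T : Ω → Ω) (f : Ω → ℝ) (n : ℕ) : Ω → ℝ :=
  fun ω => ∑ i ∈ Finset.range n, (μ[fun ω' => f (T^[i] ω') | m]) ω

lemma stronglyMeasurable_condExpPartialSum (T : Ω → Ω) (f : Ω → ℝ) (n : ℕ) :
    StronglyMeasurable[m] (condExpPartialSum m μ T f n) :=
  Finset.stronglyMeasurable_fun_sum _ fun _ _ => stronglyMeasurable_condExp

lemma integrable_condExpPartialSum (T : Ω → Ω) (f : Ω → ℝ) (n : ℕ) :
    Integrable (condExpPartialSum m μ T f n) μ :=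
  integrable_finsetSum _ fun _ _ => integrable_condExp

lemma condExp_condExpPartialSum_comp [IsFiniteMeasure μ] (T : Ω ≃ᵐ Ω)
    (hT : MeasurePreserving T μ μ) (hm : m ≤ m₀) (hmT : m ≤ m.comap T) {f : Ω → ℝ}
    (hf : StronglyMeasurable[m] f) (hfi : Integrable f μ) (n : ℕ) :
    μ[condExpPartialSum m μ T f n ∘ T | m] =ᵐ[μ] condExpPartialSum m μ T f (n + 1) - f := by
  have hfT : ∀ i, Integrable (fun ω => f (T^[i] ω)) μ := fun i =>
    (hT.iterate i).integrable_comp_of_integrable hfi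
  have hshift : ∀ i, μ[μ[fun ω => f (T^[i] ω)|m] ∘ T | m] =ᵐ[μ]
      μ[fun ω => f (T^[i + 1] ω)|m] := fun i => by
    simpa only [Function.comp_def, ← Function.iterate_succ_apply]
      using condExp_condExp_comp_of_le_comap T hT hm hmT (hfT i)
  have hsum : condExpPartialSum m μ T f n ∘ T =
      ∑ i ∈ Finset.range n, μ[fun ω => f (T^[i] ω)|m] ∘ T := by
    ext ω
    simp [condExpPartialSum, Finset.sum_apply]
  have h0 : μ[fun ω => f (T^[0] ω)|m] = f := condExp_of_stronglyMeasurable hm hf hfi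
  rw [hsum]
  refine (condExp_finsetSum
    (fun i _ => hT.integrable_comp_of_integrable integrable_condExp) m).trans ?_
  filter_upwards [(eventually_all_finset (Finset.range n)).mpr fun i _ => hshift i]
    with ω hω
  simp only [Finset.sum_apply, Pi.sub_apply, condExpPartialSum, Finset.sum_range_succ', h0]
  rw [Finset.sum_congr rfl hω]
  ring

lemma condExp_condExp_comp_eq_sub_of_tendsto [IsFiniteMeasure μ] (T : Ω ≃ᵐ Ω)
    (hT : MeasurePreserving T μ μ) (hm : m ≤ m₀) (hmT : m ≤ m.comap T) {f h : Ω → ℝ}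
    (hf : StronglyMeasurable[m] f) (hfi : Integrable f μ) (hh : Integrable h μ)
    (hS : Tendsto (fun n => ∫ ω, |condExpPartialSum m μ T f n ω - h ω| ∂μ) atTop (𝓝 0)) :
    μ[μ[h|m] ∘ T | m] =ᵐ[μ] μ[h|m] - f := by
  set H := μ[h|m]
  have hSH : Tendsto (fun n => ∫ ω, |condExpPartialSum m μ T f n ω - H ω| ∂μ) atTop (𝓝 0) :=
    tendsto_integral_abs_sub_condExp hm (stronglyMeasurable_condExpPartialSum T f)
      (integrable_condExpPartialSum T f) hh hS
  have hQH_lim : Tendsto (fun n => ∫ ω, |(condExpPartialSum m μ T f (n + 1) - f) ω -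
      (μ[H ∘ T|m]) ω| ∂μ) atTop (𝓝 0) := by
    refine squeeze_zero (fun n => integral_nonneg fun ω => abs_nonneg _) (fun n => ?_) hSH
    rw [integral_congr_ae ((condExp_condExpPartialSum_comp T hT hm hmT hf hfi n).mono
      fun ω hω => by rw [← hω])]
    exact integral_abs_condExp_comp_sub_condExp_comp_le T hT
      (integrable_condExpPartialSum T f n) integrable_condExp
  have hHf_lim : Tendsto (fun n => ∫ ω, |(condExpPartialSum m μ T f (n + 1) - f) ω -
      (H - f) ω| ∂μ) atTop (𝓝 0) := by
    simpa only [Pi.sub_apply, sub_sub_sub_cancel_right] using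
      (tendsto_add_atTop_iff_nat 1).mpr hSH
  exact ae_eq_of_tendsto_integral_abs_sub
    (fun n => (integrable_condExpPartialSum T f (n + 1)).sub hfi) integrable_condExp
    (integrable_condExp.sub hfi) hQH_lim hHf_lim

lemma exists_martingaleDiff_coboundary_of_condExp_comp_eq_sub [IsFiniteMeasure μ]
    (T : Ω ≃ᵐ Ω) (hT : MeasurePreserving T μ μ) (hm : m ≤ m₀) (hmT : m ≤ m.comap T)
    {f H : Ω → ℝ} (hH : StronglyMeasurable[m] H) (hHi : Integrable H μ)
    (hHf : μ[H ∘ T | m] =ᵐ[μ] H - f) :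
    ∃ d g : Ω → ℝ, Integrable d μ ∧ Integrable g μ ∧ Measurable[m] d ∧
      μ[d | m.comap T.symm] =ᵐ[μ] 0 ∧ ∀ᵐ ω ∂μ, f ω = d ω + g ω - g (T ω) := by
  have hTs : MeasurePreserving T.symm μ μ := hT.symm T
  set g := μ[H ∘ T | m] ∘ T.symm
  have hg : Integrable g μ := hTs.integrable_comp_of_integrable integrable_condExp
  have hg_meas : StronglyMeasurable[m.comap T.symm] g :=
    stronglyMeasurable_condExp.comp_measurable (Measurable.of_comap_le le_rfl)
  have hHg : μ[H | m.comap T.symm] =ᵐ[μ] g := by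
    have := condExp_comp_measurableEquiv T.symm hTs hm (hT.integrable_comp_of_integrable hHi)
    rwa [Function.comp_assoc, MeasurableEquiv.self_comp_symm, Function.comp_id] at this
  have hm' : m.comap T.symm ≤ m₀ := (T.comap_symm_le_of_le_comap hmT).trans hm
  refine ⟨H - g, g, hHi.sub hg, hg, hH.measurable.sub ?_, ?_, ?_⟩
  · exact (hg_meas.mono (T.comap_symm_le_of_le_comap hmT)).measurable
  · filter_upwards [condExp_sub hHi hg (m.comap T.symm), hHg] with ω h₁ h₂
    rw [h₁, Pi.sub_apply, h₂, condExp_of_stronglyMeasurable hm' hg_meas hg]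
    simp
  · filter_upwards [hHf] with ω hω
    simp only [g, Pi.sub_apply, Function.comp_apply, MeasurableEquiv.symm_apply_apply] at hω ⊢
    rw [hω]
    ring

end

theorem martingale_coboundary_decomposition_general
    {Ω : Type*} [mΩ : MeasurableSpace Ω] (μ : Measure Ω) [IsProbabilityMeasure μ]
    (T : Ω ≃ᵐ Ω) (hT : MeasurePreserving T μ μ)
    (F0 : MeasurableSpace Ω) (hF0le : F0 ≤ mΩ)
    (hF0T : F0 ≤ F0.comap T)
    (f : Ω → ℝ) (hf_meas : Measurable[F0] f) (hf_int : Integrable f μ)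
    -- the series Σ_{i ≥ 0} E(Uⁱ f | 𝓕₀) converges in L¹(ℙ)
    (hL1 : ∃ h : Ω → ℝ, Integrable h μ ∧
      Tendsto (fun n : ℕ => ∫ ω, |(∑ i ∈ Finset.range n,
          (μ[fun ω' => f ((⇑T)^[i] ω') | F0]) ω) - h ω| ∂μ) atTop (𝓝 0)) :
    ∃ m g : Ω → ℝ, Integrable m μ ∧ Integrable g μ ∧ Measurable[F0] m ∧
      -- (Uⁱm) is a stationary martingale differences sequence: E(m | 𝓕₋₁) = 0 a.s.
      μ[m | MeasurableSpace.comap (zIter T (-1)) F0] =ᵐ[μ] 0 ∧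
      ∀ᵐ ω ∂μ, f ω = m ω + g ω - g (T ω) := by
  obtain ⟨h, hh, hS⟩ := hL1
  rw [zIter_neg_one]
  exact exists_martingaleDiff_coboundary_of_condExp_comp_eq_sub T hT hF0le hF0T
    stronglyMeasurable_condExp integrable_condExp
    (condExp_condExp_comp_eq_sub_of_tendsto T hT hF0le hF0T hf_meas.stronglyMeasurable
      hf_int hh hS)

/-- **Martingale–coboundary decomposition (Gordin).** If the series `Σ_{i≥0} E(Uⁱf | 𝓕₀)`
converges in `L¹(ℙ)`, then there exist `m, g ∈ L¹(ℙ)`, with `m` measurable with respect to `𝓕₀`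
and `E(m | 𝓕₋₁) = 0` a.s. (so that `(Uⁱm)_{i≥0}` is a stationary sequence of martingale
differences), such that `f = m + g − Ug`. -/
theorem martingale_coboundary_decomposition
    {Ω : Type*} [mΩ : MeasurableSpace Ω] (μ : Measure Ω) [IsProbabilityMeasure μ]
    (T : Ω ≃ᵐ Ω) (hT : MeasurePreserving T μ μ) (hTerg : Ergodic T μ)
    (F0 : MeasurableSpace Ω) (hF0le : F0 ≤ mΩ)
    (hF0T : F0 ≤ F0.comap T)
    (f : Ω → ℝ) (hf_meas : Measurable[F0] f) (hf_int : Integrable f μ)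
    (hf_cent : ∫ ω, f ω ∂μ = 0)
    -- the series Σ_{i ≥ 0} E(Uⁱ f | 𝓕₀) converges in L¹(ℙ)
    (hL1 : ∃ h : Ω → ℝ, Integrable h μ ∧
      Tendsto (fun n : ℕ => ∫ ω, |(∑ i ∈ Finset.range n,
          (μ[fun ω' => f ((⇑T)^[i] ω') | F0]) ω) - h ω| ∂μ) atTop (𝓝 0)) :
    ∃ m g : Ω → ℝ, Integrable m μ ∧ Integrable g μ ∧ Measurable[F0] m ∧
      -- (Uⁱm) is a stationary martingale differences sequence: E(m | 𝓕₋₁) = 0 a.s.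
      μ[m | MeasurableSpace.comap (zIter T (-1)) F0] =ᵐ[μ] 0 ∧
      ∀ᵐ ω ∂μ, f ω = m ω + g ω - g (T ω) :=
  martingale_coboundary_decomposition_general (mΩ := mΩ) μ T hT F0 hF0le hF0T f hf_meas hf_int hL1
end

section
/- Let T and S be commuting bijective bimeasurable transformations of a probability space (Ω, 𝒜, ℙ) preserving ℙ, with S ergodic, and write Uf = f∘T, Vf = f∘S. Then for every centered g ∈ L¹(ℙ), lim_{n→∞} (1/n) ‖Σ_{j=1}^{n} (Vʲg − UⁿVʲg)‖₁ = 0. -/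
/-!
With `H n = ∑_{j=1}^{n} g ∘ Sʲ`, commutation of `T` and `S` turns the sum into the coboundary
`H n - H n ∘ Tⁿ`, whose `L¹` norm is at most `2 ‖H n‖₁ = 2 ‖∑_{k<n} g ∘ Sᵏ‖₁` because `Tⁿ`
preserves `ℙ`. It remains to show that the Birkhoff averages of a centered integrable `g` tend
to `0` in `L¹` (the `L¹` mean ergodic theorem). For `g ∈ L²` this is von Neumann's theorem: by
ergodicity the fixed vectors of the Koopman operator are the constants, to which `g` is
orthogonal. A general `g` is `L¹`-close to a centered bounded function, and Birkhoff averages are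
`L¹` contractions.
-/

open MeasureTheory Filter Topology
open scoped ENNReal

theorem sum_Icc_one_iterate_eq_birkhoffSum {α M : Type*} [AddCommMonoid M] (f : α → α)
    (g : α → M) (n : ℕ) (x : α) :
    ∑ j ∈ Finset.Icc 1 n, g (f^[j] x) = birkhoffSum f g n (f x) := by
  rw [birkhoffSum, ← Finset.Ico_add_one_right_eq_Icc, Finset.sum_Ico_eq_sum_range,
    Nat.add_sub_cancel]
  simp only [add_comm 1, Function.iterate_succ_apply]

namespace MeasureTheory

variable {Ω : Type*} [MeasurableSpace Ω] {μ : Measure Ω} {S T : Ω → Ω} {g : Ω → ℝ}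

theorem MeasurePreserving.integral_comp_of_aestronglyMeasurable {β E : Type*}
    [MeasurableSpace β] [NormedAddCommGroup E] [NormedSpace ℝ E] {ν : Measure β} {φ : Ω → β}
    {f : β → E} (hφ : MeasurePreserving φ μ ν) (hf : AEStronglyMeasurable f ν) :
    ∫ ω, f (φ ω) ∂μ = ∫ x, f x ∂ν := by
  rw [← integral_map hφ.aemeasurable (by rwa [hφ.map_eq]), hφ.map_eq]

theorem MeasurePreserving.integrable_birkhoffSum (hS : MeasurePreserving S μ μ)
    (hg : Integrable g μ) (n : ℕ) : Integrable (birkhoffSum S g n) μ :=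
  integrable_finsetSum _ fun k _ => (hS.iterate k).integrable_comp_of_integrable hg

theorem MeasurePreserving.integrable_birkhoffAverage (hS : MeasurePreserving S μ μ)
    (hg : Integrable g μ) (n : ℕ) : Integrable (birkhoffAverage ℝ S g n) μ :=
  (hS.integrable_birkhoffSum hg n).smul (n : ℝ)⁻¹

theorem integral_abs_birkhoffAverage (n : ℕ) :
    ∫ ω, |birkhoffAverage ℝ S g n ω| ∂μ = (∫ ω, |birkhoffSum S g n ω| ∂μ) / n := by
  simp only [birkhoffAverage, smul_eq_mul, inv_mul_eq_div, abs_div, Nat.abs_cast, integral_div]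

theorem MeasurePreserving.integral_abs_birkhoffSum_le (hS : MeasurePreserving S μ μ)
    (hg : Integrable g μ) (n : ℕ) :
    ∫ ω, |birkhoffSum S g n ω| ∂μ ≤ n * ∫ ω, |g ω| ∂μ := by
  have hterm (k : ℕ) : Integrable (fun ω => |g (S^[k] ω)|) μ :=
    ((hS.iterate k).integrable_comp_of_integrable hg).abs
  calc ∫ ω, |birkhoffSum S g n ω| ∂μ
      ≤ ∫ ω, ∑ k ∈ Finset.range n, |g (S^[k] ω)| ∂μ :=
        integral_mono (hS.integrable_birkhoffSum hg n).abs
          (integrable_finsetSum _ fun k _ => hterm k) fun ω => Finset.abs_sum_le_sum_abs _ _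
    _ = ∑ k ∈ Finset.range n, ∫ ω, |g ω| ∂μ := by
        rw [integral_finsetSum _ fun k _ => hterm k]
        exact Finset.sum_congr rfl fun k _ =>
          (hS.iterate k).integral_comp_of_aestronglyMeasurable hg.abs.aestronglyMeasurable
    _ = n * ∫ ω, |g ω| ∂μ := by simp

theorem MeasurePreserving.integral_abs_birkhoffAverage_le (hS : MeasurePreserving S μ μ)
    (hg : Integrable g μ) (n : ℕ) :
    ∫ ω, |birkhoffAverage ℝ S g n ω| ∂μ ≤ ∫ ω, |g ω| ∂μ := by
  rw [integral_abs_birkhoffAverage]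
  rcases n.eq_zero_or_pos with rfl | hn
  · simpa using integral_nonneg fun ω => abs_nonneg (g ω)
  rw [div_le_iff₀' (by exact_mod_cast hn)]
  exact hS.integral_abs_birkhoffSum_le hg n

theorem MeasurePreserving.integral_abs_birkhoffAverage_le_add (hS : MeasurePreserving S μ μ)
    {h : Ω → ℝ} (hg : Integrable g μ) (hh : Integrable h μ) (n : ℕ) :
    ∫ ω, |birkhoffAverage ℝ S g n ω| ∂μ
      ≤ ∫ ω, |g ω - h ω| ∂μ + ∫ ω, |birkhoffAverage ℝ S h n ω| ∂μ := by
  have hsplit (ω : Ω) : |birkhoffAverage ℝ S g n ω|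
      ≤ |birkhoffAverage ℝ S (g - h) n ω| + |birkhoffAverage ℝ S h n ω| := by
    rw [birkhoffAverage_sub, Pi.sub_apply, Pi.sub_apply]
    simpa using abs_sub_le (birkhoffAverage ℝ S g n ω) (birkhoffAverage ℝ S h n ω) 0
  calc ∫ ω, |birkhoffAverage ℝ S g n ω| ∂μ
      ≤ ∫ ω, |birkhoffAverage ℝ S (g - h) n ω| ∂μ + ∫ ω, |birkhoffAverage ℝ S h n ω| ∂μ := by
        rw [← integral_add (hS.integrable_birkhoffAverage (hg.sub hh) n).abs
          (hS.integrable_birkhoffAverage hh n).abs]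
        exact integral_mono (hS.integrable_birkhoffAverage hg n).abs
          ((hS.integrable_birkhoffAverage (hg.sub hh) n).abs.add
            (hS.integrable_birkhoffAverage hh n).abs) hsplit
    _ ≤ ∫ ω, |g ω - h ω| ∂μ + ∫ ω, |birkhoffAverage ℝ S h n ω| ∂μ := by
        exact add_le_add_left (hS.integral_abs_birkhoffAverage_le (hg.sub hh) n) _

namespace Lp

variable {E : Type*} [NormedAddCommGroup E] {p : ℝ≥0∞}

theorem coeFn_birkhoffSum_compMeasurePreserving (hS : MeasurePreserving S μ μ) (y : Lp E p μ)
    (n : ℕ) : ⇑(birkhoffSum (compMeasurePreserving S hS) id n y) =ᵐ[μ] birkhoffSum S y n := by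
  induction n with
  | zero => simpa using coeFn_zero E p μ
  | succ n ih =>
    have hiter : ⇑((compMeasurePreserving S hS)^[n] y) =ᵐ[μ] fun ω => y (S^[n] ω) := by
      rw [compMeasurePreserving_iterate]
      exact coeFn_compMeasurePreserving y _
    rw [birkhoffSum_succ, id]
    filter_upwards [coeFn_add (birkhoffSum (compMeasurePreserving S hS) id n y)
      ((compMeasurePreserving S hS)^[n] y), ih, hiter] with ω h₁ h₂ h₃
    rw [birkhoffSum_succ, h₁, Pi.add_apply, h₂, h₃]

theorem coeFn_birkhoffAverage_compMeasurePreserving {𝕜 : Type*} [NormedField 𝕜]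
    [NormedSpace 𝕜 E] (hS : MeasurePreserving S μ μ) (y : Lp E p μ) (n : ℕ) :
    ⇑(birkhoffAverage 𝕜 (compMeasurePreserving S hS) id n y) =ᵐ[μ] birkhoffAverage 𝕜 S y n := by
  filter_upwards [coeFn_smul (n : 𝕜)⁻¹ (birkhoffSum (compMeasurePreserving S hS) id n y),
    coeFn_birkhoffSum_compMeasurePreserving hS y n] with ω h₁ h₂
  rw [birkhoffAverage, h₁, Pi.smul_apply, h₂]
  rfl

theorem integral_norm_le_norm [IsProbabilityMeasure μ] [Fact (1 ≤ p)] (f : Lp E p μ) :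
    ∫ ω, ‖f ω‖ ∂μ ≤ ‖f‖ := by
  rw [integral_norm_eq_lintegral_enorm (Lp.aestronglyMeasurable f),
    ← eLpNorm_one_eq_lintegral_enorm, Lp.norm_def]
  exact ENNReal.toReal_mono (Lp.eLpNorm_ne_top f)
    (eLpNorm_le_eLpNorm_of_exponent_le Fact.out (Lp.aestronglyMeasurable f))

end Lp

theorem Ergodic.inner_eq_zero_of_compMeasurePreserving_eq (hS : Ergodic S μ) {z : Lp ℝ 2 μ}
    (hz : Lp.compMeasurePreserving S hS.toMeasurePreserving z = z) {y : Lp ℝ 2 μ}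
    (hy : ∫ ω, y ω ∂μ = 0) : inner ℝ z y = 0 := by
  obtain ⟨c, hc⟩ := hS.eq_const_of_compMeasurePreserving_eq (g := (z : Ω →ₘ[μ] ℝ))
    (congrArg Subtype.val hz)
  have hzc : ⇑z =ᵐ[μ] fun _ => c := by
    change ⇑(z : Ω →ₘ[μ] ℝ) =ᵐ[μ] _
    rw [hc]
    exact AEEqFun.coeFn_const Ω c
  calc inner ℝ z y = ∫ ω, c * y ω ∂μ := by
        rw [L2.inner_def]
        refine integral_congr_ae ?_
        filter_upwards [hzc] with ω hω
        simp [hω, mul_comm]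
    _ = 0 := by rw [integral_const_mul, hy, mul_zero]

theorem Ergodic.tendsto_birkhoffAverage_compMeasurePreserving_of_integral_eq_zero
    (hS : Ergodic S μ) {y : Lp ℝ 2 μ} (hy : ∫ ω, y ω ∂μ = 0) :
    Tendsto (birkhoffAverage ℝ (Lp.compMeasurePreserving S hS.toMeasurePreserving) id · y) atTop
      (𝓝 0) := by
  set U : Lp ℝ 2 μ →L[ℝ] Lp ℝ 2 μ :=
    (Lp.compMeasurePreservingₗᵢ ℝ S hS.toMeasurePreserving).toContinuousLinearMap
  have hproj : (U.eqLocus (1 : Lp ℝ 2 μ →L[ℝ] Lp ℝ 2 μ)).orthogonalProjectionOnto y = 0 :=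
    Submodule.orthogonalProjectionOnto_eq_zero_iff.mpr <| (Submodule.mem_orthogonal _ _).mpr
      fun z hz => hS.inner_eq_zero_of_compMeasurePreserving_eq hz hy
  have h := U.tendsto_birkhoffAverage_orthogonalProjection
    (LinearIsometry.norm_toContinuousLinearMap_le _) y
  rwa [hproj, ZeroMemClass.coe_zero] at h

theorem Ergodic.tendsto_integral_abs_birkhoffAverage_of_memLp_two [IsProbabilityMeasure μ]
    (hS : Ergodic S μ) {h : Ω → ℝ} (hh : MemLp h 2 μ) (hc : ∫ ω, h ω ∂μ = 0) :
    Tendsto (fun n => ∫ ω, |birkhoffAverage ℝ S h n ω| ∂μ) atTop (𝓝 0) := by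
  have hy : ∫ ω, hh.toLp h ω ∂μ = 0 := by rwa [integral_congr_ae hh.coeFn_toLp]
  have hL2 := (hS.tendsto_birkhoffAverage_compMeasurePreserving_of_integral_eq_zero hy).norm
  rw [norm_zero] at hL2
  refine squeeze_zero (fun n => integral_nonneg fun ω => abs_nonneg _) (fun n => ?_) hL2
  refine le_of_eq_of_le (integral_congr_ae ?_) (Lp.integral_norm_le_norm _)
  filter_upwards [Lp.coeFn_birkhoffAverage_compMeasurePreserving (𝕜 := ℝ)
    hS.toMeasurePreserving (hh.toLp h) n,
    hS.quasiMeasurePreserving.birkhoffAverage_ae_eq_of_ae_eq ℝ hh.coeFn_toLp n] with ω h₁ h₂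
  rw [Real.norm_eq_abs, h₁, h₂]

theorem Integrable.exists_memLp_top_integral_eq_zero_integral_abs_sub_lt
    [IsProbabilityMeasure μ] (hg : Integrable g μ) (hc : ∫ ω, g ω ∂μ = 0) {ε : ℝ} (hε : 0 < ε) :
    ∃ h : Ω → ℝ, MemLp h ⊤ μ ∧ ∫ ω, h ω ∂μ = 0 ∧ ∫ ω, |g ω - h ω| ∂μ < ε := by
  obtain ⟨s, hgs, hs⟩ := (memLp_one_iff_integrable.2 hg).exists_simpleFunc_eLpNorm_sub_lt
    ENNReal.one_ne_top (ENNReal.ofReal_pos.2 (half_pos hε)).ne'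
  have hs : Integrable s μ := memLp_one_iff_integrable.1 hs
  have hgs_abs : Integrable (fun ω => |g ω - s ω|) μ := (hg.sub hs).abs
  have hgs : ∫ ω, |g ω - s ω| ∂μ < ε / 2 := by
    have h_eq : ∫ ω, |g ω - s ω| ∂μ = (eLpNorm (g - ⇑s) 1 μ).toReal := by
      rw [eLpNorm_one_eq_lintegral_enorm, ← integral_norm_eq_lintegral_enorm
        (hg.sub hs).aestronglyMeasurable]
      rfl
    exact h_eq ▸ ENNReal.toReal_lt_of_lt_ofReal hgs
  have hmean : |∫ ω, s ω ∂μ| ≤ ∫ ω, |g ω - s ω| ∂μ := by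
    calc |∫ ω, s ω ∂μ| = |∫ ω, (g ω - s ω) ∂μ| := by
          rw [integral_sub hg hs, hc, zero_sub, abs_neg]
      _ ≤ ∫ ω, |g ω - s ω| ∂μ := abs_integral_le_integral_abs
  refine ⟨fun ω => s ω - ∫ ω, s ω ∂μ, (s.memLp_top μ).sub (memLp_const _), ?_, ?_⟩
  · simp [integral_sub hs (integrable_const _)]
  calc ∫ ω, |g ω - (s ω - ∫ ω, s ω ∂μ)| ∂μ ≤ ∫ ω, (|g ω - s ω| + |∫ ω, s ω ∂μ|) ∂μ := by
        refine integral_mono ((hg.sub (hs.sub (integrable_const _))).abs)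
          (hgs_abs.add (integrable_const _)) fun ω => ?_
        rw [sub_sub_eq_add_sub, add_sub_right_comm]
        exact abs_add_le _ _
    _ = ∫ ω, |g ω - s ω| ∂μ + |∫ ω, s ω ∂μ| := by
        rw [integral_add hgs_abs (integrable_const _)]
        simp
    _ < ε := by linarith

theorem Ergodic.tendsto_integral_abs_birkhoffAverage_of_integral_eq_zero
    [IsProbabilityMeasure μ] (hS : Ergodic S μ) (hg : Integrable g μ) (hc : ∫ ω, g ω ∂μ = 0) :
    Tendsto (fun n => ∫ ω, |birkhoffAverage ℝ S g n ω| ∂μ) atTop (𝓝 0) := by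
  refine Metric.tendsto_atTop.2 fun ε hε => ?_
  obtain ⟨h, hh, hhc, hgh⟩ :=
    hg.exists_memLp_top_integral_eq_zero_integral_abs_sub_lt hc (half_pos hε)
  obtain ⟨N, hN⟩ := Metric.tendsto_atTop.1
    (hS.tendsto_integral_abs_birkhoffAverage_of_memLp_two (hh.mono_exponent le_top) hhc)
    (ε / 2) (half_pos hε)
  refine ⟨N, fun n hn => ?_⟩
  have hNn := hN n hn
  have hnonneg {f : Ω → ℝ} : 0 ≤ ∫ ω, |birkhoffAverage ℝ S f n ω| ∂μ :=
    integral_nonneg fun ω => abs_nonneg _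
  rw [Real.dist_eq, sub_zero, abs_of_nonneg hnonneg] at hNn ⊢
  have happrox := hS.toMeasurePreserving.integral_abs_birkhoffAverage_le_add hg
    (hh.integrable le_top) n
  linarith

theorem integral_abs_sub_comp_le (hT : MeasurePreserving T μ μ) {H : Ω → ℝ}
    (hH : Integrable H μ) :
    ∫ ω, |H ω - H (T ω)| ∂μ ≤ 2 * ∫ ω, |H ω| ∂μ := by
  have hHT : Integrable (fun ω => H (T ω)) μ := hT.integrable_comp_of_integrable hH
  calc ∫ ω, |H ω - H (T ω)| ∂μ ≤ ∫ ω, (|H ω| + |H (T ω)|) ∂μ :=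
        integral_mono (hH.sub hHT).abs (hH.abs.add hHT.abs) fun ω => abs_sub _ _
    _ = 2 * ∫ ω, |H ω| ∂μ := by
        rw [integral_add hH.abs hHT.abs,
          hT.integral_comp_of_aestronglyMeasurable hH.abs.aestronglyMeasurable]
        ring

theorem integral_abs_sum_sub_comm_le (hT : MeasurePreserving T μ μ)
    (hS : MeasurePreserving S μ μ) (hTS : Function.Commute T S) (hg : Integrable g μ) (n : ℕ) :
    ∫ ω, |∑ j ∈ Finset.Icc 1 n, (g (S^[j] ω) - g (T (S^[j] ω)))| ∂μ
      ≤ 2 * ∫ ω, |birkhoffSum S g n ω| ∂μ := by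
  set H := fun ω => birkhoffSum S g n (S ω)
  have hsum (ω : Ω) :
      ∑ j ∈ Finset.Icc 1 n, (g (S^[j] ω) - g (T (S^[j] ω))) = H ω - H (T ω) := by
    simp only [Finset.sum_sub_distrib, H, ← sum_Icc_one_iterate_eq_birkhoffSum,
      (hTS.iterate_right _).eq]
  have hH : Integrable H μ := hS.integrable_comp_of_integrable (hS.integrable_birkhoffSum hg n)
  calc _ = ∫ ω, |H ω - H (T ω)| ∂μ := by simp only [hsum]
    _ ≤ 2 * ∫ ω, |H ω| ∂μ := integral_abs_sub_comp_le hT hH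
    _ = 2 * ∫ ω, |birkhoffSum S g n ω| ∂μ := by
        rw [hS.integral_comp_of_aestronglyMeasurable
          (hS.integrable_birkhoffSum hg n).abs.aestronglyMeasurable]

end MeasureTheory

theorem cesaro_coboundary_l1_negligible_general
    {Ω : Type*} [mΩ : MeasurableSpace Ω] (μ : Measure Ω) [IsProbabilityMeasure μ]
    (T S : Ω ≃ᵐ Ω) (hcomm : ∀ ω, T (S ω) = S (T ω))
    (hT : MeasurePreserving T μ μ)
    (hSerg : Ergodic S μ)
    (g : Ω → ℝ) (hg_int : Integrable g μ) (hg_cent : ∫ ω, g ω ∂μ = 0) :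
    Tendsto (fun n : ℕ =>
        (∫ ω, |∑ j ∈ Finset.Icc 1 n,
            (g ((⇑S)^[j] ω) - g ((⇑T)^[n] ((⇑S)^[j] ω)))| ∂μ) / n)
      atTop (𝓝 0) := by
  have hTS : Function.Commute T S := hcomm
  have hbound (n : ℕ) :
      (∫ ω, |∑ j ∈ Finset.Icc 1 n, (g ((⇑S)^[j] ω) - g ((⇑T)^[n] ((⇑S)^[j] ω)))| ∂μ) / n
        ≤ 2 * ∫ ω, |birkhoffAverage ℝ S g n ω| ∂μ := by
    rw [integral_abs_birkhoffAverage, ← mul_div_assoc]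
    gcongr
    exact integral_abs_sum_sub_comm_le (hT.iterate n) hSerg.toMeasurePreserving
      (hTS.iterate_left n) hg_int n
  have hlim := (hSerg.tendsto_integral_abs_birkhoffAverage_of_integral_eq_zero hg_int
    hg_cent).const_mul 2
  rw [mul_zero] at hlim
  exact squeeze_zero (fun n => div_nonneg (integral_nonneg fun ω => abs_nonneg _)
    n.cast_nonneg) hbound hlim

/-- Let `T` and `S` be commuting bijective bimeasurable transformations preserving `ℙ`, with
`S` ergodic. Then for every centered `g ∈ L¹(ℙ)`,
`lim_{n→∞} (1/n) ‖Σ_{j=1}^{n} (Vʲg − UⁿVʲg)‖₁ = 0`. -/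
theorem cesaro_coboundary_l1_negligible
    {Ω : Type*} [mΩ : MeasurableSpace Ω] (μ : Measure Ω) [IsProbabilityMeasure μ]
    (T S : Ω ≃ᵐ Ω) (hcomm : ∀ ω, T (S ω) = S (T ω))
    (hT : MeasurePreserving T μ μ) (hS : MeasurePreserving S μ μ)
    (hSerg : Ergodic S μ)
    (g : Ω → ℝ) (hg_int : Integrable g μ) (hg_cent : ∫ ω, g ω ∂μ = 0) :
    Tendsto (fun n : ℕ =>
        (∫ ω, |∑ j ∈ Finset.Icc 1 n,
            (g ((⇑S)^[j] ω) - g ((⇑T)^[n] ((⇑S)^[j] ω)))| ∂μ) / n)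
      atTop (𝓝 0) :=
  cesaro_coboundary_l1_negligible_general (mΩ := mΩ) μ T S hcomm hT hSerg g hg_int hg_cent
end
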